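/- Suppose for every m and every continuous m-homogeneous polynomial P : c₀ → ℂ the inequality (Σ_{α∈Λ_M}|c_α(P)|^{2M/(M+1)})^{(M+1)/(2M)} ≤ D_m ‖P‖ holds with D_m = C(m+M-1,m)^{(M+1)/(2M)} · (m!/(⌊m/M⌋!)^M) · C_M · e^m. Then, combining with (Σ_{α∈Λ_M}|c_α(P)|²)^{1/2} ≤ ‖P‖ and ℓ^p interpolation with θ = M/m, one obtains (Σ_{α∈Λ_M}|c_α(P)|^{2m/(m+1)})^{(m+1)/(2m)} ≤ D_m^{M/m} ‖P‖, and D_m^{M/m} is bounded uniformly in m. -/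

import Mathlib

/-! The `2m/(m+1)`-estimate is Hölder's inequality in its interpolation form
`‖a‖_p ≤ ‖a‖_{p₀}^θ ‖a‖_{p₁}^{1-θ}` for `1/p = θ/p₀ + (1-θ)/p₁`. For the uniform bound, peeling
blocks of size `⌊m/M⌋` off `m!` with `(a+b)! ≤ 2^(a+b) a! b!` gives `m! ≤ 2^(mM) M! ⌊m/M⌋!^M`, so
`D m ≤ K A^m` for constants `K ≥ 1`, `A`, and then `D m ^ (M/m) ≤ K A^M`. -/

open Finset Real
open scoped Nat

theorem Real.Lp_le_Lp_rpow_mul_Lq_rpow_of_nonneg {ι : Type*} (s : Finset ι) {a : ι → ℝ}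
    (ha : ∀ i ∈ s, 0 ≤ a i) {p p₀ p₁ θ : ℝ} (hp₀ : 0 < p₀) (hp₁ : 0 < p₁) (hθ₀ : 0 < θ)
    (hθ₁ : θ < 1) (hp : p⁻¹ = θ / p₀ + (1 - θ) / p₁) :
    (∑ i ∈ s, a i ^ p) ^ p⁻¹ ≤
      ((∑ i ∈ s, a i ^ p₀) ^ p₀⁻¹) ^ θ * ((∑ i ∈ s, a i ^ p₁) ^ p₁⁻¹) ^ (1 - θ) := by
  -- Hölder for `a ^ p = (a ^ θ * a ^ (1 - θ)) ^ p` with exponents `p₀ / θ` and `p₁ / (1 - θ)`.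
  have hθ₁' : 0 < 1 - θ := sub_pos.2 hθ₁
  have hp_pos : 0 < p := inv_pos.1 (hp ▸ by positivity)
  have hT : HolderTriple (p₀ / θ) (p₁ / (1 - θ)) p :=
    ⟨by rw [inv_div, inv_div, hp], by positivity, by positivity⟩
  have holder := Lr_rpow_le_Lp_mul_Lq_of_nonneg s hT
    (fun i hi => rpow_nonneg (ha i hi) θ) (fun i hi => rpow_nonneg (ha i hi) (1 - θ))
  have hsplit : ∀ i ∈ s, (a i ^ θ * a i ^ (1 - θ)) ^ p = a i ^ p := fun i hi => by
    rw [← rpow_add' (ha i hi) (by norm_num), add_sub_cancel, rpow_one]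
  have hpow : ∀ {t q : ℝ}, t ≠ 0 → ∀ i ∈ s, (a i ^ t) ^ (q / t) = a i ^ q := fun ht i hi => by
    rw [← rpow_mul (ha i hi), mul_div_cancel₀ _ ht]
  rw [sum_congr rfl hsplit, sum_congr rfl (hpow hθ₀.ne'), sum_congr rfl (hpow hθ₁'.ne')] at holder
  have hS₀ : 0 ≤ ∑ i ∈ s, a i ^ p₀ := sum_nonneg fun i hi => rpow_nonneg (ha i hi) _
  have hS₁ : 0 ≤ ∑ i ∈ s, a i ^ p₁ := sum_nonneg fun i hi => rpow_nonneg (ha i hi) _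
  calc (∑ i ∈ s, a i ^ p) ^ p⁻¹
      ≤ ((∑ i ∈ s, a i ^ p₀) ^ (p / (p₀ / θ)) * (∑ i ∈ s, a i ^ p₁) ^ (p / (p₁ / (1 - θ))))
          ^ p⁻¹ :=
        rpow_le_rpow (sum_nonneg fun i hi => rpow_nonneg (ha i hi) _) holder (by positivity)
    _ = _ := by
        rw [mul_rpow (by positivity) (by positivity), ← rpow_mul hS₀, ← rpow_mul hS₁,
          ← rpow_mul hS₀, ← rpow_mul hS₁]
        congr 2 <;> field_simp

theorem Real.Lp_le_rpow_mul_of_interpolation {ι : Type*} (s : Finset ι) {a : ι → ℝ}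
    (ha : ∀ i ∈ s, 0 ≤ a i) {p p₀ p₁ θ D N : ℝ} (hp₀ : 0 < p₀) (hp₁ : 0 < p₁) (hθ₀ : 0 < θ)
    (hθ₁ : θ ≤ 1) (hp : p⁻¹ = θ / p₀ + (1 - θ) / p₁) (hD : 0 ≤ D) (hN : 0 ≤ N)
    (h₀ : (∑ i ∈ s, a i ^ p₀) ^ p₀⁻¹ ≤ D * N) (h₁ : (∑ i ∈ s, a i ^ p₁) ^ p₁⁻¹ ≤ N) :
    (∑ i ∈ s, a i ^ p) ^ p⁻¹ ≤ D ^ θ * N := by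
  rcases hθ₁.lt_or_eq with hθ₁ | rfl
  · have hS₀ : 0 ≤ (∑ i ∈ s, a i ^ p₀) ^ p₀⁻¹ :=
      rpow_nonneg (sum_nonneg fun i hi => rpow_nonneg (ha i hi) _) _
    have hS₁ : 0 ≤ (∑ i ∈ s, a i ^ p₁) ^ p₁⁻¹ :=
      rpow_nonneg (sum_nonneg fun i hi => rpow_nonneg (ha i hi) _) _
    calc (∑ i ∈ s, a i ^ p) ^ p⁻¹
        ≤ ((∑ i ∈ s, a i ^ p₀) ^ p₀⁻¹) ^ θ * ((∑ i ∈ s, a i ^ p₁) ^ p₁⁻¹) ^ (1 - θ) :=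
          Lp_le_Lp_rpow_mul_Lq_rpow_of_nonneg s ha hp₀ hp₁ hθ₀ hθ₁ hp
      _ ≤ (D * N) ^ θ * N ^ (1 - θ) := by gcongr
      _ = D ^ θ * N := by
          rw [mul_rpow hD hN, mul_assoc, ← rpow_add' hN (by simp), add_sub_cancel, rpow_one]
  · rw [sub_self, zero_div, add_zero, one_div, inv_inj] at hp
    subst hp
    simpa using h₀

theorem Nat.factorial_add_le (a b : ℕ) : (a + b)! ≤ 2 ^ (a + b) * a ! * b ! := by
  rw [← add_choose_mul_factorial_mul_factorial]
  gcongr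
  exact choose_le_two_pow _ _

theorem Nat.factorial_mul_add_le (j k r : ℕ) :
    (j * k + r)! ≤ 2 ^ ((j * k + r) * j) * k ! ^ j * r ! := by
  induction j with
  | zero => simp
  | succ j ih =>
    calc ((j + 1) * k + r)! = (k + (j * k + r))! := by ring_nf
      _ ≤ 2 ^ (k + (j * k + r)) * k ! * (j * k + r)! := factorial_add_le _ _
      _ ≤ 2 ^ ((j + 1) * k + r) * k ! * (2 ^ (((j + 1) * k + r) * j) * k ! ^ j * r !) := by
          grw [ih, show k + (j * k + r) = (j + 1) * k + r by ring]
          gcongr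
          · exact one_le_two
          · exact j.le_succ
      _ = 2 ^ (((j + 1) * k + r) * (j + 1)) * k ! ^ (j + 1) * r ! := by ring

theorem Nat.factorial_le_factorial_div_pow (m M : ℕ) (hM : 0 < M) :
    m ! ≤ 2 ^ (m * M) * M ! * (m / M)! ^ M := by
  have hmod : (m % M)! ≤ M ! := factorial_le (mod_lt m hM).le
  calc m ! = (M * (m / M) + m % M)! := by rw [div_add_mod]
    _ ≤ 2 ^ (m * M) * (m / M)! ^ M * (m % M)! := by
        simpa only [mul_comm M, div_add_mod'] using factorial_mul_add_le M (m / M) (m % M)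
    _ ≤ 2 ^ (m * M) * M ! * (m / M)! ^ M := by rw [mul_right_comm]; gcongr

theorem Real.rpow_div_le_of_le_mul_pow {x K A : ℝ} {M m : ℕ} (hx : 0 ≤ x) (hK : 1 ≤ K)
    (hA : 0 ≤ A) (hm : m ≠ 0) (hMm : M ≤ m) (h : x ≤ K * A ^ m) :
    x ^ ((M : ℝ) / m) ≤ K * A ^ M := by
  have hθ : (M : ℝ) / m ≤ 1 := div_le_one_of_le₀ (by exact_mod_cast hMm) (Nat.cast_nonneg m)
  calc x ^ ((M : ℝ) / m) ≤ (K * A ^ m) ^ ((M : ℝ) / m) := by gcongr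
    _ = K ^ ((M : ℝ) / m) * A ^ M := by
        rw [mul_rpow (by positivity) (by positivity), ← rpow_natCast A m, ← rpow_mul hA,
          mul_div_cancel₀ _ (by exact_mod_cast hm), rpow_natCast]
    _ ≤ K * A ^ M := by grw [rpow_le_self_of_one_le hK hθ]

theorem choose_rpow_mul_factorial_div_mul_exp_pow_le (M m : ℕ) (hM : 0 < M) {C : ℝ}
    (hC : 0 ≤ C) :
    ((m + M - 1).choose m : ℝ) ^ (((M : ℝ) + 1) / (2 * M)) *
        ((m ! : ℝ) / ((m / M)! : ℝ) ^ M) * C * exp 1 ^ m ≤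
      (2 ^ M * M ! * C) * (2 ^ (M + 1) * exp 1) ^ m := by
  have hchoose : ((m + M - 1).choose m : ℝ) ^ (((M : ℝ) + 1) / (2 * M)) ≤ 2 ^ (m + M) := by
    have hexp : ((M : ℝ) + 1) / (2 * M) ≤ 1 := by
      rw [div_le_one (by positivity)]
      linarith [show (1 : ℝ) ≤ M by exact_mod_cast hM]
    grw [rpow_le_self_of_one_le (by exact_mod_cast Nat.choose_pos (by omega)) hexp]
    exact_mod_cast (Nat.choose_le_two_pow _ _).trans (Nat.pow_le_pow_right two_pos (by omega))
  have hfactorial : (m ! : ℝ) / ((m / M)! : ℝ) ^ M ≤ 2 ^ (m * M) * M ! := by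
    rw [div_le_iff₀ (by positivity)]
    exact_mod_cast Nat.factorial_le_factorial_div_pow m M hM
  calc ((m + M - 1).choose m : ℝ) ^ (((M : ℝ) + 1) / (2 * M)) *
        ((m ! : ℝ) / ((m / M)! : ℝ) ^ M) * C * exp 1 ^ m
      ≤ 2 ^ (m + M) * (2 ^ (m * M) * M !) * C * exp 1 ^ m := by gcongr
    _ = (2 ^ M * M ! * C) * (2 ^ (M + 1) * exp 1) ^ m := by ring

/-- Let `D m = C(m+M-1,m)^((M+1)/(2M)) · (m!/(⌊m/M⌋!)^M) · C_M · e^m`. If for an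
`m`-homogeneous polynomial `P` on `c₀` (modelled as a multivariate polynomial), with
`Λ_M` the multi-indices with at most `M` nonzero entries and `N` a bound playing the
role of `‖P‖`, the `2M/(M+1)`-estimate with constant `D m` and the ℓ²-estimate hold,
then ℓ^p interpolation with `θ = M/m` yields the `2m/(m+1)`-estimate with constant
`D m ^ (M/m)`, and `D m ^ (M/m)` is bounded uniformly in `m`. -/
theorem stmt15 (M : ℕ) (hM : 0 < M) (C : ℝ) (hC : 1 ≤ C) (D : ℕ → ℝ)
    (hD : ∀ m : ℕ, D m =
      (((m + M - 1).choose m : ℝ)) ^ (((M : ℝ) + 1) / (2 * (M : ℝ))) *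
        ((m.factorial : ℝ) / ((m / M).factorial : ℝ) ^ M) * C * Real.exp 1 ^ m) :
    (∀ m : ℕ, M ≤ m → ∀ P : MvPolynomial ℕ ℂ, P.IsHomogeneous m → ∀ N : ℝ, 0 ≤ N →
      (∑ α ∈ P.support.filter (fun α => α.support.card ≤ M),
          ‖P.coeff α‖ ^ (2 * (M : ℝ) / ((M : ℝ) + 1))) ^ (((M : ℝ) + 1) / (2 * (M : ℝ)))
        ≤ D m * N →
      (∑ α ∈ P.support.filter (fun α => α.support.card ≤ M),
          ‖P.coeff α‖ ^ (2 : ℝ)) ^ ((1 : ℝ) / 2) ≤ N →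
      (∑ α ∈ P.support.filter (fun α => α.support.card ≤ M),
          ‖P.coeff α‖ ^ (2 * (m : ℝ) / ((m : ℝ) + 1))) ^ (((m : ℝ) + 1) / (2 * (m : ℝ)))
        ≤ D m ^ ((M : ℝ) / (m : ℝ)) * N) ∧
    ∃ B : ℝ, ∀ m : ℕ, M ≤ m → D m ^ ((M : ℝ) / (m : ℝ)) ≤ B := by
  have hD_nonneg : ∀ m, 0 ≤ D m := fun m => by rw [hD]; positivity
  constructor
  · intro m hm P _ N hN h₀ h₁
    have hM₀ : (0 : ℝ) < M := by exact_mod_cast hM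
    have hMm : (M : ℝ) ≤ m := by exact_mod_cast hm
    have hm₀ : (0 : ℝ) < m := hM₀.trans_le hMm
    have hexponent : (2 * (m : ℝ) / (m + 1))⁻¹ = M / m / (2 * M / (M + 1)) + (1 - M / m) / 2 := by
      field_simp
      ring
    have key := Lp_le_rpow_mul_of_interpolation (a := fun α => ‖P.coeff α‖) _
      (fun _ _ => norm_nonneg _) (by positivity) two_pos (div_pos hM₀ hm₀)
      (div_le_one_of_le₀ hMm hm₀.le) hexponent (hD_nonneg m) hN (by rwa [inv_div])
      (by rwa [← one_div])
    rwa [inv_div] at key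
  · have hK : (1 : ℝ) ≤ 2 ^ M * M ! * C := one_le_mul_of_one_le_of_one_le
      (one_le_mul_of_one_le_of_one_le (one_le_pow₀ one_le_two) (mod_cast M.factorial_pos)) hC
    exact ⟨_, fun m hm => rpow_div_le_of_le_mul_pow (hD_nonneg m) hK (by positivity) (by omega) hm
      ((hD m).trans_le (choose_rpow_mul_factorial_div_mul_exp_pow_le M m hM (by linarith)))⟩
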